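/- Let n ≥ 1, let S ⊆ {0,1}ⁿ, and for x ∈ {0,1}ⁿ let |x̃⟩ = |x̃₁⟩⊗⋯⊗|x̃ₙ⟩ where |0̃⟩ = |0⟩ and |1̃⟩ = (|0⟩+|1⟩)/√2. Let ψ be any unit vector in the span of {|x̃⟩ : x ∈ S}. Then |S| ≥ |⟨H^{⊗n}|ψ⟩|² · cos(π/8)^{−2n}, where |H⟩ = cos(π/8)|0⟩ + sin(π/8)|1⟩. -/

import Mathlib

open scoped BigOperators

/-- The product stabilizer state `|x̃⟩ = |x̃₁⟩⊗⋯⊗|x̃ₙ⟩` with `|0̃⟩ = |0⟩` and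
`|1̃⟩ = |+⟩ = (|0⟩+|1⟩)/√2`, as a vector in `ℂ^{2ⁿ}` indexed by `Fin n → Bool`. -/
noncomputable def tilde (n : ℕ) (x : Fin n → Bool) : EuclideanSpace ℂ (Fin n → Bool) :=
  (WithLp.equiv 2 ((Fin n → Bool) → ℂ)).symm fun y =>
    ∏ i, (if x i then ((Real.sqrt 2 : ℝ) : ℂ)⁻¹ else if y i then 0 else 1)

/-- The state `|H⟩^{⊗n}` with `|H⟩ = cos(π/8)|0⟩ + sin(π/8)|1⟩`. -/
noncomputable def Hstate (n : ℕ) : EuclideanSpace ℂ (Fin n → Bool) :=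
  (WithLp.equiv 2 ((Fin n → Bool) → ℂ)).symm fun y =>
    ∏ i, (if y i then ((Real.sin (Real.pi / 8) : ℝ) : ℂ)
          else ((Real.cos (Real.pi / 8) : ℝ) : ℂ))

/-!
Write `ψ = ∑_{x ∈ S} c x • |x̃⟩`. Each `|x̃⟩` has overlap `cos(π/8)ⁿ` with `|H⟩^{⊗n}`, so
`⟨H^{⊗n}|ψ⟩ = cos(π/8)ⁿ ∑ c x`, and `⟨x̃|ỹ⟩ = s ^ d(x, y)` with `s = 1/√2` and `d` the Hamming
distance, so `1 = ‖ψ‖² = ∑ c̄ x c y s ^ d(x, y)`. It therefore suffices that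
`|∑ c x|² ≤ |S| ∑ c̄ x c y s ^ d(x, y)` for every `0 ≤ s ≤ 1`. Expanding
`s ^ d(x, y) = ∏ i ((1 - s) [x i = y i] + s)` writes this kernel as a convex combination, over
`T ⊆ [n]`, of the kernels `[x = y on T]`. For such a kernel the quadratic form is the sum over
its classes `C` of `|∑_{x ∈ C} c x|²`, and Cauchy–Schwarz over the at most `|S|` classes gives the
bound.
-/

open scoped ComplexConjugate InnerProductSpace
open Finset RCLike

section Kernel

variable {𝕜 α : Type*} [RCLike 𝕜]

lemma norm_sum_smul_sq_eq_sum_sum {E : Type*} [NormedAddCommGroup E] [InnerProductSpace 𝕜 E]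
    (S : Finset α) (c : α → 𝕜) (v : α → E) (K : α → α → ℝ)
    (hK : ∀ x y, ⟪v x, v y⟫_𝕜 = K x y) :
    ‖∑ x ∈ S, c x • v x‖ ^ 2 = ∑ x ∈ S, ∑ y ∈ S, K x y * re (conj (c x) * c y) := by
  rw [@norm_sq_eq_re_inner 𝕜, sum_inner, map_sum]
  refine sum_congr rfl fun x _ => ?_
  rw [inner_sum, map_sum]
  refine sum_congr rfl fun y _ => ?_
  rw [inner_smul_left, inner_smul_right, hK, ← mul_assoc, mul_comm, re_ofReal_mul]

lemma norm_sum_sq_le_card_mul_sum_sum_ite_eq {β : Type*} [DecidableEq β]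
    (S : Finset α) (c : α → 𝕜) (f : α → β) :
    ‖∑ x ∈ S, c x‖ ^ 2 ≤
      #S * ∑ x ∈ S, ∑ y ∈ S, (if f x = f y then 1 else 0) * re (conj (c x) * c y) := by
  set g : β → 𝕜 := fun b => ∑ y ∈ S with f y = b, c y
  have hmaps : ∀ x ∈ S, f x ∈ S.image f := fun x hx => mem_image_of_mem f hx
  have hsum : ∑ x ∈ S, c x = ∑ b ∈ S.image f, g b := (sum_fiberwise_of_maps_to hmaps c).symm
  have hquad : ∑ x ∈ S, ∑ y ∈ S, (if f x = f y then 1 else 0) * re (conj (c x) * c y) =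
      ∑ b ∈ S.image f, ‖g b‖ ^ 2 := by
    have hinner : ∀ x ∈ S, ∑ y ∈ S, (if f x = f y then 1 else 0) * re (conj (c x) * c y) =
        re (conj (c x) * g (f x)) := by
      intro x _
      simp only [g, mul_sum, map_sum, sum_filter, eq_comm]
      refine sum_congr rfl fun y _ => ?_
      split_ifs <;> simp
    rw [sum_congr rfl hinner, ← sum_fiberwise_of_maps_to hmaps]
    refine sum_congr rfl fun b _ => ?_
    rw [sum_congr rfl fun x hx => by rw [(mem_filter.1 hx).2], ← map_sum, ← sum_mul, ← map_sum,
      RCLike.conj_mul, ← ofReal_pow, ofReal_re]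
  calc ‖∑ x ∈ S, c x‖ ^ 2 ≤ (∑ b ∈ S.image f, ‖g b‖) ^ 2 := by
        rw [hsum]; gcongr; exact norm_sum_le _ _
    _ ≤ #(S.image f) * ∑ b ∈ S.image f, ‖g b‖ ^ 2 := sq_sum_le_card_mul_sum_sq
    _ ≤ #S * ∑ b ∈ S.image f, ‖g b‖ ^ 2 := by gcongr; exact card_image_le
    _ = _ := by rw [hquad]

variable {ι : Type*} [Fintype ι]

lemma prod_ite_eq_pow_hammingDist {β : ι → Type*} [∀ i, DecidableEq (β i)] {M : Type*}
    [CommMonoid M] (s : M) (x y : ∀ i, β i) :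
    ∏ i, (if x i = y i then 1 else s) = s ^ hammingDist x y := by
  rw [prod_ite, prod_const_one, one_mul, prod_const, hammingDist]

lemma pow_hammingDist_eq_sum [DecidableEq ι] [DecidableEq α] {R : Type*} [CommRing R] (s : R)
    (x y : ι → α) :
    s ^ hammingDist x y =
      ∑ T : Finset ι, (1 - s) ^ #T * s ^ #Tᶜ * if ∀ i ∈ T, x i = y i then 1 else 0 := by
  have hsplit : ∀ i,
      (if x i = y i then 1 else s) = (1 - s) * (if x i = y i then 1 else 0) + s := by
    intro i; split_ifs <;> ring
  rw [← prod_ite_eq_pow_hammingDist, Finset.prod_congr rfl fun i _ => hsplit i, Fintype.prod_add]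
  refine sum_congr rfl fun T _ => ?_
  rw [prod_mul_distrib, prod_const, prod_boole, prod_const, mul_right_comm]
  -- the two sides differ only in their `Decidable` instances
  congr

theorem norm_sum_sq_le_card_mul_sum_sum_pow_hammingDist [DecidableEq ι] [DecidableEq α] {s : ℝ}
    (hs0 : 0 ≤ s) (hs1 : s ≤ 1) (S : Finset (ι → α)) (c : (ι → α) → 𝕜) :
    ‖∑ x ∈ S, c x‖ ^ 2 ≤
      #S * ∑ x ∈ S, ∑ y ∈ S, s ^ hammingDist x y * re (conj (c x) * c y) := by
  set w : Finset ι → ℝ := fun T => (1 - s) ^ #T * s ^ #Tᶜ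
  have hw0 : ∀ T, 0 ≤ w T := fun T =>
    mul_nonneg (pow_nonneg (sub_nonneg.2 hs1) _) (pow_nonneg hs0 _)
  have hw1 : ∑ T, w T = 1 := by
    simpa [w] using (Fintype.prod_add (fun _ : ι => 1 - s) fun _ => s).symm
  have hfiber : ∀ T : Finset ι, ‖∑ x ∈ S, c x‖ ^ 2 ≤ #S * ∑ x ∈ S, ∑ y ∈ S,
      (if ∀ i ∈ T, x i = y i then 1 else 0) * re (conj (c x) * c y) := by
    intro T
    simpa [funext_iff] using norm_sum_sq_le_card_mul_sum_sum_ite_eq S c T.restrict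
  calc ‖∑ x ∈ S, c x‖ ^ 2 = ∑ T, w T * ‖∑ x ∈ S, c x‖ ^ 2 := by rw [← sum_mul, hw1, one_mul]
    _ ≤ ∑ T, w T * (#S * ∑ x ∈ S, ∑ y ∈ S,
          (if ∀ i ∈ T, x i = y i then 1 else 0) * re (conj (c x) * c y)) := by
      gcongr with T; exact hfiber T
    _ = _ := by
      simp_rw [pow_hammingDist_eq_sum s, sum_mul, mul_sum]
      rw [sum_comm]
      refine sum_congr rfl fun x _ => ?_
      rw [sum_comm]
      refine sum_congr rfl fun y _ => sum_congr rfl fun T _ => ?_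
      ring

end Kernel

lemma inner_eq_prod_sum_of_apply_eq_prod {𝕜 ι β : Type*} [RCLike 𝕜] [Fintype ι] [DecidableEq ι]
    [Fintype β] {u v : EuclideanSpace 𝕜 (ι → β)} (f g : ι → β → 𝕜)
    (hu : ∀ w, u w = ∏ i, f i (w i)) (hv : ∀ w, v w = ∏ i, g i (w i)) :
    ⟪u, v⟫_𝕜 = ∏ i, ∑ b, conj (f i b) * g i b := by
  rw [Fintype.prod_sum, PiLp.inner_apply]
  refine sum_congr rfl fun w _ => ?_
  rw [RCLike.inner_apply, hu, hv, map_prod, ← prod_mul_distrib]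
  exact prod_congr rfl fun i _ => mul_comm _ _

section Qubits

open Real

lemma cos_add_sin_eq_sqrt_two_mul_cos (x : ℝ) : cos x + sin x = √2 * cos (π / 4 - x) := by
  rw [cos_sub, cos_pi_div_four, sin_pi_div_four]
  linear_combination (-(cos x + sin x) / 2) * Real.mul_self_sqrt (zero_le_two (α := ℝ))

noncomputable def tildeAmp (a b : Bool) : ℂ :=
  if a then ((√2 : ℝ) : ℂ)⁻¹ else if b then 0 else 1

noncomputable def hAmp (b : Bool) : ℂ :=
  if b then ((sin (π / 8) : ℝ) : ℂ) else ((cos (π / 8) : ℝ) : ℂ)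

lemma sum_conj_tildeAmp_mul_tildeAmp (a a' : Bool) :
    ∑ b, conj (tildeAmp a b) * tildeAmp a' b = ((if a = a' then 1 else (√2)⁻¹ : ℝ) : ℂ) := by
  have h : ((√2 : ℝ) : ℂ)⁻¹ * ((√2 : ℝ) : ℂ)⁻¹ = 1 / 2 := by
    rw [← mul_inv, ← Complex.ofReal_mul, Real.mul_self_sqrt zero_le_two]; norm_num
  cases a <;> cases a' <;> simp [tildeAmp, h]

lemma sum_conj_hAmp_mul_tildeAmp (a : Bool) :
    ∑ b, conj (hAmp b) * tildeAmp a b = ((cos (π / 8) : ℝ) : ℂ) := by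
  cases a
  · simp only [hAmp, tildeAmp, Fintype.sum_bool, Bool.false_eq_true, if_true, if_false,
      Complex.conj_ofReal, mul_zero, mul_one, zero_add]
  · have h := cos_add_sin_eq_sqrt_two_mul_cos (π / 8)
    rw [show π / 4 - π / 8 = π / 8 by ring] at h
    have hs : ((√2 : ℝ) : ℂ) ≠ 0 := by exact_mod_cast (by positivity : √2 ≠ 0)
    simp only [hAmp, tildeAmp, Fintype.sum_bool, Bool.false_eq_true, if_true, if_false,
      Complex.conj_ofReal]
    rw [← add_mul, add_comm, ← Complex.ofReal_add, h, Complex.ofReal_mul]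
    field_simp

variable {n : ℕ}

lemma tilde_apply (x y : Fin n → Bool) : tilde n x y = ∏ i, tildeAmp (x i) (y i) := rfl

lemma Hstate_apply (y : Fin n → Bool) : Hstate n y = ∏ i, hAmp (y i) := rfl

lemma inner_tilde_tilde (x y : Fin n → Bool) :
    ⟪tilde n x, tilde n y⟫_ℂ = (((√2)⁻¹ ^ hammingDist x y : ℝ) : ℂ) := by
  rw [inner_eq_prod_sum_of_apply_eq_prod _ _ (tilde_apply x) (tilde_apply y),
    ← prod_ite_eq_pow_hammingDist, Complex.ofReal_prod]
  exact prod_congr rfl fun i _ => sum_conj_tildeAmp_mul_tildeAmp (x i) (y i)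

lemma inner_Hstate_tilde (x : Fin n → Bool) :
    ⟪Hstate n, tilde n x⟫_ℂ = ((cos (π / 8) ^ n : ℝ) : ℂ) := by
  rw [inner_eq_prod_sum_of_apply_eq_prod (fun _ => hAmp) _ Hstate_apply (tilde_apply x)]
  simp only [sum_conj_hAmp_mul_tildeAmp, prod_const, card_univ, Fintype.card_fin,
    Complex.ofReal_pow]

end Qubits

/-- Lower bound on the size of a product-stabilizer decomposition:
any unit vector `ψ` in the span of `{|x̃⟩ : x ∈ S}` satisfies
`|S| ≥ |⟨H^{⊗n}|ψ⟩|² · cos(π/8)^{−2n}`. -/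
theorem stab_rank_lower_bound (n : ℕ) (S : Finset (Fin n → Bool))
    (ψ : EuclideanSpace ℂ (Fin n → Bool)) (hψ : ‖ψ‖ = 1)
    (hmem : ψ ∈ Submodule.span ℂ (tilde n '' (S : Set (Fin n → Bool)))) :
    (S.card : ℝ) ≥ ‖(inner ℂ (Hstate n) ψ : ℂ)‖ ^ 2 / Real.cos (Real.pi / 8) ^ (2 * n) := by
  obtain ⟨c, rfl⟩ := (Submodule.mem_span_image_finset_iff_exists_fun' ℂ).1 hmem
  have hcos : 0 < Real.cos (Real.pi / 8) :=
    Real.cos_pos_of_mem_Ioo ⟨by linarith [Real.pi_pos], by linarith [Real.pi_pos]⟩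
  have hH : ⟪Hstate n, ∑ x ∈ S, c x • tilde n x⟫_ℂ =
      ((Real.cos (Real.pi / 8) ^ n : ℝ) : ℂ) * ∑ x ∈ S, c x := by
    simp only [inner_sum, inner_smul_right, inner_Hstate_tilde, mul_sum, mul_comm]
  have hgram := norm_sum_smul_sq_eq_sum_sum S c (tilde n)
    (fun x y => (√2)⁻¹ ^ hammingDist x y) inner_tilde_tilde
  have hbound := norm_sum_sq_le_card_mul_sum_sum_pow_hammingDist (s := (√2)⁻¹) (by positivity)
    (inv_le_one_of_one_le₀ Real.one_lt_sqrt_two.le) S c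
  rw [← hgram, hψ, one_pow, mul_one] at hbound
  rw [ge_iff_le, div_le_iff₀ (by positivity), hH, norm_mul, mul_pow, Complex.norm_real,
    Real.norm_of_nonneg (by positivity), ← pow_mul, mul_comm n 2, mul_comm (S.card : ℝ)]
  gcongr
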